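/- For every formula φ of the fragment μLTL and every infinite word w over 2^Ap: w ⊨ φ if and only if the set of indices {i | af(φ, w_{0i}) ≡_P tt} is infinite. (This is the correctness of the deterministic Büchi automaton A_μ^φ with states Reach(φ), transition function af, initial state φ, and Büchi condition inf(tt).) -/
import Mathlib


/-- LTL formulas in negation normal form over atomic propositions `Ap`. -/
inductive LTL (Ap : Type) : Type
  | tt : LTL Ap
  | ff : LTL Ap
  | atom (a : Ap) : LTL Ap
  | natom (a : Ap) : LTL Ap
  | conj (φ ψ : LTL Ap) : LTL Ap
  | disj (φ ψ : LTL Ap) : LTL Ap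
  | next (φ : LTL Ap) : LTL Ap
  | fut (φ : LTL Ap) : LTL Ap
  | glob (φ : LTL Ap) : LTL Ap
  | untl (φ ψ : LTL Ap) : LTL Ap
  | wUntl (φ ψ : LTL Ap) : LTL Ap
  | strongRel (φ ψ : LTL Ap) : LTL Ap
  | rel (φ ψ : LTL Ap) : LTL Ap

variable {Ap : Type} [DecidableEq Ap]

/-- The suffix `w_i` of an infinite word. -/
def suffix (w : ℕ → Finset Ap) (i : ℕ) : ℕ → Finset Ap := fun k => w (i + k)

/-- Standard LTL satisfaction over infinite words over `2^Ap`. -/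
def Sat : (ℕ → Finset Ap) → LTL Ap → Prop
  | _, .tt => True
  | _, .ff => False
  | w, .atom a => a ∈ w 0
  | w, .natom a => a ∉ w 0
  | w, .conj φ ψ => Sat w φ ∧ Sat w ψ
  | w, .disj φ ψ => Sat w φ ∨ Sat w ψ
  | w, .next φ => Sat (suffix w 1) φ
  | w, .fut φ => ∃ k, Sat (suffix w k) φ
  | w, .glob φ => ∀ k, Sat (suffix w k) φ
  | w, .untl φ ψ => ∃ k, Sat (suffix w k) ψ ∧ ∀ j < k, Sat (suffix w j) φ
  | w, .wUntl φ ψ =>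
      (∀ k, Sat (suffix w k) φ) ∨ (∃ k, Sat (suffix w k) ψ ∧ ∀ j < k, Sat (suffix w j) φ)
  | w, .strongRel φ ψ => ∃ k, Sat (suffix w k) φ ∧ ∀ j ≤ k, Sat (suffix w j) ψ
  | w, .rel φ ψ =>
      (∀ k, Sat (suffix w k) ψ) ∨ (∃ k, Sat (suffix w k) φ ∧ ∀ j ≤ k, Sat (suffix w j) ψ)

/-- The "after" function on a single letter `ν ∈ 2^Ap`. -/
def afLetter : LTL Ap → Finset Ap → LTL Ap
  | .tt, _ => .tt
  | .ff, _ => .ff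
  | .atom a, ν => if a ∈ ν then .tt else .ff
  | .natom a, ν => if a ∈ ν then .ff else .tt
  | .conj φ ψ, ν => .conj (afLetter φ ν) (afLetter ψ ν)
  | .disj φ ψ, ν => .disj (afLetter φ ν) (afLetter ψ ν)
  | .next φ, _ => φ
  | .fut φ, ν => .disj (afLetter φ ν) (.fut φ)
  | .glob φ, ν => .conj (afLetter φ ν) (.glob φ)
  | .untl φ ψ, ν => .disj (afLetter ψ ν) (.conj (afLetter φ ν) (.untl φ ψ))
  | .wUntl φ ψ, ν => .disj (afLetter ψ ν) (.conj (afLetter φ ν) (.wUntl φ ψ))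
  | .strongRel φ ψ, ν => .conj (afLetter ψ ν) (.disj (afLetter φ ν) (.strongRel φ ψ))
  | .rel φ ψ, ν => .conj (afLetter ψ ν) (.disj (afLetter φ ν) (.rel φ ψ))

/-- The "after" function extended to finite words. -/
def af : LTL Ap → List (Finset Ap) → LTL Ap
  | φ, [] => φ
  | φ, ν :: u => af (afLetter φ ν) u

/-- The finite prefix `w_{0i} = w[0]⋯w[i-1]` of an infinite word. -/
def prefixWord (w : ℕ → Finset Ap) (i : ℕ) : List (Finset Ap) :=
  (List.range i).map w

/-- The finite infix `w_{ij} = w[i]⋯w[j-1]` of an infinite word. -/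
def infixWord (w : ℕ → Finset Ap) (i j : ℕ) : List (Finset Ap) :=
  (List.range (j - i)).map (fun k => w (i + k))

/-- Evaluation of a formula as a propositional formula, where every maximal
proper subformula (root not `∧`/`∨`) is treated as a propositional variable
whose truth value is given by the assignment `v`. -/
def propEval (v : LTL Ap → Prop) : LTL Ap → Prop
  | .tt => True
  | .ff => False
  | .conj φ ψ => propEval v φ ∧ propEval v ψ
  | .disj φ ψ => propEval v φ ∨ propEval v ψ
  | φ => v φ

/-- Propositional equivalence `φ ≡_P ψ`. -/
def propEquiv (φ ψ : LTL Ap) : Prop := ∀ v, propEval v φ ↔ propEval v ψ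

/-- The set of subformulas of a formula (including itself). -/
def subf : LTL Ap → Set (LTL Ap)
  | .tt => {LTL.tt}
  | .ff => {LTL.ff}
  | .atom a => {LTL.atom a}
  | .natom a => {LTL.natom a}
  | .conj φ ψ => insert (.conj φ ψ) (subf φ ∪ subf ψ)
  | .disj φ ψ => insert (.disj φ ψ) (subf φ ∪ subf ψ)
  | .next φ => insert (.next φ) (subf φ)
  | .fut φ => insert (.fut φ) (subf φ)
  | .glob φ => insert (.glob φ) (subf φ)
  | .untl φ ψ => insert (.untl φ ψ) (subf φ ∪ subf ψ)
  | .wUntl φ ψ => insert (.wUntl φ ψ) (subf φ ∪ subf ψ)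
  | .strongRel φ ψ => insert (.strongRel φ ψ) (subf φ ∪ subf ψ)
  | .rel φ ψ => insert (.rel φ ψ) (subf φ ∪ subf ψ)

/-- A formula is proper if its root is not a conjunction or a disjunction. -/
def isProper : LTL Ap → Prop
  | .conj _ _ => False
  | .disj _ _ => False
  | _ => True

/-- The set of proper subformulas of `φ`. -/
def properSubf (φ : LTL Ap) : Set (LTL Ap) := {ψ | ψ ∈ subf φ ∧ isProper ψ}

/-- Formulas whose root is a least-fixed-point operator (`F`, `U`, `M`). -/
def isMu : LTL Ap → Prop
  | .fut _ => True
  | .untl _ _ => True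
  | .strongRel _ _ => True
  | _ => False

/-- Formulas whose root is a greatest-fixed-point operator (`G`, `W`, `R`). -/
def isNu : LTL Ap → Prop
  | .glob _ => True
  | .wUntl _ _ => True
  | .rel _ _ => True
  | _ => False

/-- `μ(φ)`: subformulas of `φ` of the form `Fψ`, `ψ₁Uψ₂`, `ψ₁Mψ₂`. -/
def muSet (φ : LTL Ap) : Set (LTL Ap) := {ψ | ψ ∈ subf φ ∧ isMu ψ}

/-- `ν(φ)`: subformulas of `φ` of the form `Gψ`, `ψ₁Wψ₂`, `ψ₁Rψ₂`. -/
def nuSet (φ : LTL Ap) : Set (LTL Ap) := {ψ | ψ ∈ subf φ ∧ isNu ψ}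

/-- `GF_w = {ψ ∈ μ(φ) | w ⊨ GFψ}`. -/
def GFSet (φ : LTL Ap) (w : ℕ → Finset Ap) : Set (LTL Ap) :=
  {ψ | ψ ∈ muSet φ ∧ Sat w (.glob (.fut ψ))}

/-- `F_w = {ψ ∈ μ(φ) | w ⊨ Fψ}`. -/
def FSet (φ : LTL Ap) (w : ℕ → Finset Ap) : Set (LTL Ap) :=
  {ψ | ψ ∈ muSet φ ∧ Sat w (.fut ψ)}

/-- `FG_w = {ψ ∈ ν(φ) | w ⊨ FGψ}`. -/
def FGSet (φ : LTL Ap) (w : ℕ → Finset Ap) : Set (LTL Ap) :=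
  {ψ | ψ ∈ nuSet φ ∧ Sat w (.fut (.glob ψ))}

/-- `G_w = {ψ ∈ ν(φ) | w ⊨ Gψ}`. -/
def GSet (φ : LTL Ap) (w : ℕ → Finset Ap) : Set (LTL Ap) :=
  {ψ | ψ ∈ nuSet φ ∧ Sat w (.glob ψ)}

open scoped Classical in
/-- `φ[X]_ν`. -/
noncomputable def evalNu (X : Set (LTL Ap)) : LTL Ap → LTL Ap
  | .tt => .tt
  | .ff => .ff
  | .atom a => .atom a
  | .natom a => .natom a
  | .conj φ ψ => .conj (evalNu X φ) (evalNu X ψ)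
  | .disj φ ψ => .disj (evalNu X φ) (evalNu X ψ)
  | .next φ => .next (evalNu X φ)
  | .glob φ => .glob (evalNu X φ)
  | .wUntl φ ψ => .wUntl (evalNu X φ) (evalNu X ψ)
  | .rel φ ψ => .rel (evalNu X φ) (evalNu X ψ)
  | .fut φ => if LTL.fut φ ∈ X then .tt else .ff
  | .untl φ ψ => if LTL.untl φ ψ ∈ X then .wUntl (evalNu X φ) (evalNu X ψ) else .ff
  | .strongRel φ ψ => if LTL.strongRel φ ψ ∈ X then .rel (evalNu X φ) (evalNu X ψ) else .ff

open scoped Classical in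
/-- `φ[Y]_μ`. -/
noncomputable def evalMu (Y : Set (LTL Ap)) : LTL Ap → LTL Ap
  | .tt => .tt
  | .ff => .ff
  | .atom a => .atom a
  | .natom a => .natom a
  | .conj φ ψ => .conj (evalMu Y φ) (evalMu Y ψ)
  | .disj φ ψ => .disj (evalMu Y φ) (evalMu Y ψ)
  | .next φ => .next (evalMu Y φ)
  | .fut φ => .fut (evalMu Y φ)
  | .untl φ ψ => .untl (evalMu Y φ) (evalMu Y ψ)
  | .strongRel φ ψ => .strongRel (evalMu Y φ) (evalMu Y ψ)
  | .glob φ => if LTL.glob φ ∈ Y then .tt else .ff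
  | .wUntl φ ψ => if LTL.wUntl φ ψ ∈ Y then .tt else .untl (evalMu Y φ) (evalMu Y ψ)
  | .rel φ ψ => if LTL.rel φ ψ ∈ Y then .tt else .strongRel (evalMu Y φ) (evalMu Y ψ)

/-- Concatenation `u·w` of a finite word and an infinite word. -/
def wordAppend (u : List (Finset Ap)) (w : ℕ → Finset Ap) : ℕ → Finset Ap :=
  fun i => if h : i < u.length then u.get ⟨i, h⟩ else w (i - u.length)

/-- The smallest set of formulas containing `tt`, `ff` and all elements of `S`
that is closed under conjunction and disjunction. -/
inductive PosBool (S : Set (LTL Ap)) : LTL Ap → Prop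
  | tt : PosBool S .tt
  | ff : PosBool S .ff
  | base {ψ : LTL Ap} : ψ ∈ S → PosBool S ψ
  | conj {φ ψ : LTL Ap} : PosBool S φ → PosBool S ψ → PosBool S (.conj φ ψ)
  | disj {φ ψ : LTL Ap} : PosBool S φ → PosBool S ψ → PosBool S (.disj φ ψ)

/-- `Reach(φ)`: the set of `≡_P`-equivalence classes of the formulas `af(φ,u)`
over all finite words `u`. -/
def Reach (φ : LTL Ap) : Set (Set (LTL Ap)) :=
  {C | ∃ u : List (Finset Ap), C = {ψ | propEquiv ψ (af φ u)}}

/-- The fragment `μLTL`: only `tt`, `ff`, literals, `∧`, `∨`, `X`, `F`, `U`, `M`. -/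
def inMuLTL : LTL Ap → Prop
  | .tt => True
  | .ff => True
  | .atom _ => True
  | .natom _ => True
  | .conj φ ψ => inMuLTL φ ∧ inMuLTL ψ
  | .disj φ ψ => inMuLTL φ ∧ inMuLTL ψ
  | .next φ => inMuLTL φ
  | .fut φ => inMuLTL φ
  | .untl φ ψ => inMuLTL φ ∧ inMuLTL ψ
  | .strongRel φ ψ => inMuLTL φ ∧ inMuLTL ψ
  | .glob _ => False
  | .wUntl _ _ => False
  | .rel _ _ => False

/-- The fragment `νLTL`: only `tt`, `ff`, literals, `∧`, `∨`, `X`, `G`, `W`, `R`. -/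
def inNuLTL : LTL Ap → Prop
  | .tt => True
  | .ff => True
  | .atom _ => True
  | .natom _ => True
  | .conj φ ψ => inNuLTL φ ∧ inNuLTL ψ
  | .disj φ ψ => inNuLTL φ ∧ inNuLTL ψ
  | .next φ => inNuLTL φ
  | .glob φ => inNuLTL φ
  | .wUntl φ ψ => inNuLTL φ ∧ inNuLTL ψ
  | .rel φ ψ => inNuLTL φ ∧ inNuLTL ψ
  | .fut _ => False
  | .untl _ _ => False
  | .strongRel _ _ => False

set_option linter.unusedSectionVars false

/-! ### Auxiliary lemmas -/

section AuxLemmas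

variable {Ap : Type} [DecidableEq Ap]

/-- `χ` is a propositional tautology. -/
def TTEq (χ : LTL Ap) : Prop := ∀ v : LTL Ap → Prop, propEval v χ

lemma propEquiv_tt_iff {χ : LTL Ap} : propEquiv χ LTL.tt ↔ TTEq χ := by
  constructor
  · intro h v
    exact (h v).mpr trivial
  · intro h v
    simp only [propEval]
    exact ⟨fun _ => trivial, fun _ => h v⟩

lemma ttEq_tt : TTEq (LTL.tt : LTL Ap) := fun _ => trivial

lemma ttEq_conj {a b : LTL Ap} (ha : TTEq a) (hb : TTEq b) : TTEq (LTL.conj a b) :=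
  fun v => ⟨ha v, hb v⟩

lemma ttEq_disj_left {a b : LTL Ap} (ha : TTEq a) : TTEq (LTL.disj a b) :=
  fun v => Or.inl (ha v)

lemma ttEq_disj_right {a b : LTL Ap} (hb : TTEq b) : TTEq (LTL.disj a b) :=
  fun v => Or.inr (hb v)

lemma propEval_afLetter (v : LTL Ap → Prop) (χ : LTL Ap) (ν : Finset Ap) :
    propEval v (afLetter χ ν) ↔ propEval (fun ψ => propEval v (afLetter ψ ν)) χ := by
  induction χ with
  | conj a b iha ihb => simp only [afLetter, propEval]; rw [iha, ihb]
  | disj a b iha ihb => simp only [afLetter, propEval]; rw [iha, ihb]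
  | _ => exact Iff.rfl

lemma ttEq_afLetter {χ : LTL Ap} (h : TTEq χ) (ν : Finset Ap) : TTEq (afLetter χ ν) := by
  intro v
  rw [propEval_afLetter]
  exact h _

lemma ttEq_af {χ : LTL Ap} (h : TTEq χ) : ∀ u : List (Finset Ap), TTEq (af χ u)
  | [] => h
  | ν :: u => ttEq_af (ttEq_afLetter h ν) u

lemma af_append (χ : LTL Ap) (u v : List (Finset Ap)) :
    af χ (u ++ v) = af (af χ u) v := by
  induction u generalizing χ with
  | nil => rfl
  | cons ν u ih => simp only [List.cons_append, af]; exact ih _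

lemma af_conj (a b : LTL Ap) (u : List (Finset Ap)) :
    af (LTL.conj a b) u = LTL.conj (af a u) (af b u) := by
  induction u generalizing a b with
  | nil => rfl
  | cons ν u ih => simp only [af, afLetter]; exact ih _ _

lemma af_disj (a b : LTL Ap) (u : List (Finset Ap)) :
    af (LTL.disj a b) u = LTL.disj (af a u) (af b u) := by
  induction u generalizing a b with
  | nil => rfl
  | cons ν u ih => simp only [af, afLetter]; exact ih _ _

lemma af_fut_cons (φ : LTL Ap) (ν : Finset Ap) (u : List (Finset Ap)) :
    af (LTL.fut φ) (ν :: u) = LTL.disj (af φ (ν :: u)) (af (LTL.fut φ) u) := by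
  show af (LTL.disj (afLetter φ ν) (LTL.fut φ)) u = _
  rw [af_disj]
  rfl

lemma af_untl_cons (φ ψ : LTL Ap) (ν : Finset Ap) (u : List (Finset Ap)) :
    af (LTL.untl φ ψ) (ν :: u) =
      LTL.disj (af ψ (ν :: u)) (LTL.conj (af φ (ν :: u)) (af (LTL.untl φ ψ) u)) := by
  show af (LTL.disj (afLetter ψ ν) (LTL.conj (afLetter φ ν) (LTL.untl φ ψ))) u = _
  rw [af_disj, af_conj]
  rfl

lemma af_srel_cons (φ ψ : LTL Ap) (ν : Finset Ap) (u : List (Finset Ap)) :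
    af (LTL.strongRel φ ψ) (ν :: u) =
      LTL.conj (af ψ (ν :: u)) (LTL.disj (af φ (ν :: u)) (af (LTL.strongRel φ ψ) u)) := by
  show af (LTL.conj (afLetter ψ ν) (LTL.disj (afLetter φ ν) (LTL.strongRel φ ψ))) u = _
  rw [af_conj, af_disj]
  rfl

lemma suffix_zero (w : ℕ → Finset Ap) : suffix w 0 = w :=
  funext fun k => by simp [suffix]

lemma suffix_suffix (w : ℕ → Finset Ap) (i j : ℕ) :
    suffix (suffix w i) j = suffix w (i + j) :=
  funext fun k => by simp [suffix, Nat.add_assoc]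

lemma prefix_add (w : ℕ → Finset Ap) (i j : ℕ) :
    prefixWord w (i + j) = prefixWord w i ++ prefixWord (suffix w i) j := by
  simp [prefixWord, List.range_add, suffix, Function.comp]

lemma prefix_succ (w : ℕ → Finset Ap) (j : ℕ) :
    prefixWord w (j + 1) = w 0 :: prefixWord (suffix w 1) j := by
  rw [show j + 1 = 1 + j from Nat.add_comm j 1, prefix_add]
  simp [prefixWord, show List.range 1 = [0] from rfl]

lemma ttEq_mono {χ : LTL Ap} {w : ℕ → Finset Ap} {i j : ℕ} (hij : i ≤ j)
    (h : TTEq (af χ (prefixWord w i))) : TTEq (af χ (prefixWord w j)) := by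
  obtain ⟨d, rfl⟩ := Nat.exists_eq_add_of_le hij
  rw [prefix_add, af_append]
  exact ttEq_af h _

lemma sat_iff_propEval (w : ℕ → Finset Ap) (χ : LTL Ap) :
    Sat w χ ↔ propEval (Sat w) χ := by
  induction χ with
  | conj a b iha ihb => simp only [Sat, propEval]; rw [iha, ihb]
  | disj a b iha ihb => simp only [Sat, propEval]; rw [iha, ihb]
  | _ => exact Iff.rfl

lemma sat_of_ttEq {χ : LTL Ap} (h : TTEq χ) (w : ℕ → Finset Ap) : Sat w χ :=
  (sat_iff_propEval w χ).mpr (h _)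

lemma susu (v : ℕ → Finset Ap) (k : ℕ) : suffix (suffix v 1) k = suffix v (k + 1) := by
  rw [suffix_suffix, Nat.add_comm]

lemma sat_afLetter (φ : LTL Ap) (w : ℕ → Finset Ap) :
    Sat w φ ↔ Sat (suffix w 1) (afLetter φ (w 0)) := by
  induction φ with
  | tt => simp [Sat, afLetter]
  | ff => simp [Sat, afLetter]
  | atom a => by_cases h : a ∈ w 0 <;> simp [Sat, afLetter, h]
  | natom a => by_cases h : a ∈ w 0 <;> simp [Sat, afLetter, h]
  | conj a b iha ihb => simp only [Sat, afLetter]; rw [iha, ihb]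
  | disj a b iha ihb => simp only [Sat, afLetter]; rw [iha, ihb]
  | next a ih => exact Iff.rfl
  | fut a ih =>
    simp only [Sat, afLetter, susu]
    rw [← ih]
    constructor
    · rintro ⟨k, hk⟩
      cases k with
      | zero => rw [suffix_zero] at hk; exact Or.inl hk
      | succ k => exact Or.inr ⟨k, hk⟩
    · rintro (h | ⟨k, hk⟩)
      · exact ⟨0, by rwa [suffix_zero]⟩
      · exact ⟨k + 1, hk⟩
  | glob a ih =>
    simp only [Sat, afLetter, susu]
    rw [← ih]
    constructor
    · intro h
      exact ⟨by have := h 0; rwa [suffix_zero] at this, fun k => h (k + 1)⟩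
    · rintro ⟨h0, hs⟩ k
      cases k with
      | zero => rwa [suffix_zero]
      | succ k => exact hs k
  | untl a b iha ihb =>
    simp only [Sat, afLetter, susu]
    rw [← iha, ← ihb]
    constructor
    · rintro ⟨k, hb, ha⟩
      cases k with
      | zero => rw [suffix_zero] at hb; exact Or.inl hb
      | succ k =>
        refine Or.inr ⟨?_, k, hb, fun j hj => ha (j + 1) (Nat.succ_lt_succ hj)⟩
        have := ha 0 (Nat.succ_pos k); rwa [suffix_zero] at this
    · rintro (h | ⟨h0, k, hb, ha⟩)
      · exact ⟨0, by rwa [suffix_zero], fun j hj => absurd hj (Nat.not_lt_zero j)⟩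
      · refine ⟨k + 1, hb, fun j hj => ?_⟩
        cases j with
        | zero => rwa [suffix_zero]
        | succ j => exact ha j (Nat.lt_of_succ_lt_succ hj)
  | wUntl a b iha ihb =>
    simp only [Sat, afLetter, susu]
    rw [← iha, ← ihb]
    constructor
    · rintro (hG | ⟨k, hb, ha⟩)
      · refine Or.inr ⟨?_, Or.inl fun k => hG (k + 1)⟩
        have := hG 0; rwa [suffix_zero] at this
      · cases k with
        | zero => rw [suffix_zero] at hb; exact Or.inl hb
        | succ k =>
          refine Or.inr ⟨?_, Or.inr ⟨k, hb, fun j hj => ha (j + 1) (Nat.succ_lt_succ hj)⟩⟩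
          have := ha 0 (Nat.succ_pos k); rwa [suffix_zero] at this
    · rintro (h | ⟨h0, hG | ⟨k, hb, ha⟩⟩)
      · exact Or.inr ⟨0, by rwa [suffix_zero], fun j hj => absurd hj (Nat.not_lt_zero j)⟩
      · refine Or.inl fun k => ?_
        cases k with
        | zero => rwa [suffix_zero]
        | succ k => exact hG k
      · refine Or.inr ⟨k + 1, hb, fun j hj => ?_⟩
        cases j with
        | zero => rwa [suffix_zero]
        | succ j => exact ha j (Nat.lt_of_succ_lt_succ hj)
  | strongRel a b iha ihb =>
    simp only [Sat, afLetter, susu]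
    rw [← iha, ← ihb]
    constructor
    · rintro ⟨k, ha, hb⟩
      refine ⟨by have := hb 0 (Nat.zero_le k); rwa [suffix_zero] at this, ?_⟩
      cases k with
      | zero => rw [suffix_zero] at ha; exact Or.inl ha
      | succ k => exact Or.inr ⟨k, ha, fun j hj => hb (j + 1) (Nat.succ_le_succ hj)⟩
    · rintro ⟨hb0, ha0 | ⟨k, ha, hb⟩⟩
      · refine ⟨0, by rwa [suffix_zero], fun j hj => ?_⟩
        rw [Nat.le_zero.mp hj, suffix_zero]; exact hb0
      · refine ⟨k + 1, ha, fun j hj => ?_⟩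
        cases j with
        | zero => rwa [suffix_zero]
        | succ j => exact hb j (Nat.le_of_succ_le_succ hj)
  | rel a b iha ihb =>
    simp only [Sat, afLetter, susu]
    rw [← iha, ← ihb]
    constructor
    · rintro (hG | ⟨k, ha, hb⟩)
      · exact ⟨by have := hG 0; rwa [suffix_zero] at this, Or.inr (Or.inl fun k => hG (k + 1))⟩
      · refine ⟨by have := hb 0 (Nat.zero_le k); rwa [suffix_zero] at this, ?_⟩
        cases k with
        | zero => rw [suffix_zero] at ha; exact Or.inl ha
        | succ k => exact Or.inr (Or.inr ⟨k, ha, fun j hj => hb (j + 1) (Nat.succ_le_succ hj)⟩)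
    · rintro ⟨hb0, ha0 | hG | ⟨k, ha, hb⟩⟩
      · refine Or.inr ⟨0, by rwa [suffix_zero], fun j hj => ?_⟩
        rw [Nat.le_zero.mp hj, suffix_zero]; exact hb0
      · refine Or.inl fun k => ?_
        cases k with
        | zero => rwa [suffix_zero]
        | succ k => exact hG k
      · refine Or.inr ⟨k + 1, ha, fun j hj => ?_⟩
        cases j with
        | zero => rwa [suffix_zero]
        | succ j => exact hb j (Nat.le_of_succ_le_succ hj)

lemma sat_af (φ : LTL Ap) (w : ℕ → Finset Ap) :
    ∀ i, Sat w φ ↔ Sat (suffix w i) (af φ (prefixWord w i)) := by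
  intro i
  induction i generalizing φ w with
  | zero => rw [suffix_zero]; exact Iff.rfl
  | succ i ih =>
    rw [sat_afLetter φ w, ih (afLetter φ (w 0)) (suffix w 1)]
    rw [suffix_suffix, Nat.add_comm 1 i, prefix_succ]
    exact Iff.rfl

lemma untl_aux {φ ψ : LTL Ap}
    (ihφ : ∀ w, Sat w φ → ∃ i, TTEq (af φ (prefixWord w i)))
    (ihψ : ∀ w, Sat w ψ → ∃ i, TTEq (af ψ (prefixWord w i))) :
    ∀ (k : ℕ) (w : ℕ → Finset Ap), Sat (suffix w k) ψ → (∀ j < k, Sat (suffix w j) φ) →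
      ∃ i, TTEq (af (LTL.untl φ ψ) (prefixWord w i)) := by
  intro k
  induction k with
  | zero =>
    intro w hψ _
    rw [suffix_zero] at hψ
    obtain ⟨i₀, hi⟩ := ihψ w hψ
    refine ⟨i₀ + 1, ?_⟩
    have hi' := ttEq_mono (Nat.le_succ i₀) hi
    rw [prefix_succ] at hi' ⊢
    rw [af_untl_cons]
    exact ttEq_disj_left hi'
  | succ k ihk =>
    intro w hψ hφs
    have hφ0 : Sat w φ := by
      have := hφs 0 (Nat.succ_pos k); rwa [suffix_zero] at this
    have hψ' : Sat (suffix (suffix w 1) k) ψ := by rw [susu]; exact hψ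
    have hφs' : ∀ j < k, Sat (suffix (suffix w 1) j) φ := by
      intro j hj
      rw [susu]
      exact hφs (j + 1) (Nat.succ_lt_succ hj)
    obtain ⟨m₁, hm₁⟩ := ihk (suffix w 1) hψ' hφs'
    obtain ⟨iφ, hiφ⟩ := ihφ w hφ0
    have h1 : TTEq (af (LTL.untl φ ψ) (prefixWord (suffix w 1) (max m₁ iφ))) :=
      ttEq_mono (le_max_left _ _) hm₁
    have h2 : TTEq (af φ (prefixWord w (max m₁ iφ + 1))) :=
      ttEq_mono (le_trans (le_max_right _ _) (Nat.le_succ _)) hiφ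
    refine ⟨max m₁ iφ + 1, ?_⟩
    rw [prefix_succ] at h2 ⊢
    rw [af_untl_cons]
    exact ttEq_disj_right (ttEq_conj h2 h1)

lemma srel_aux {φ ψ : LTL Ap}
    (ihφ : ∀ w, Sat w φ → ∃ i, TTEq (af φ (prefixWord w i)))
    (ihψ : ∀ w, Sat w ψ → ∃ i, TTEq (af ψ (prefixWord w i))) :
    ∀ (k : ℕ) (w : ℕ → Finset Ap), Sat (suffix w k) φ → (∀ j ≤ k, Sat (suffix w j) ψ) →
      ∃ i, TTEq (af (LTL.strongRel φ ψ) (prefixWord w i)) := by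
  intro k
  induction k with
  | zero =>
    intro w hφ hψs
    rw [suffix_zero] at hφ
    have hψ : Sat w ψ := by
      have := hψs 0 (Nat.le_refl 0); rwa [suffix_zero] at this
    obtain ⟨iφ, hiφ⟩ := ihφ w hφ
    obtain ⟨iψ, hiψ⟩ := ihψ w hψ
    have h1 : TTEq (af φ (prefixWord w (max iφ iψ + 1))) :=
      ttEq_mono (le_trans (le_max_left _ _) (Nat.le_succ _)) hiφ
    have h2 : TTEq (af ψ (prefixWord w (max iφ iψ + 1))) :=
      ttEq_mono (le_trans (le_max_right _ _) (Nat.le_succ _)) hiψ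
    refine ⟨max iφ iψ + 1, ?_⟩
    rw [prefix_succ] at h1 h2 ⊢
    rw [af_srel_cons]
    exact ttEq_conj h2 (ttEq_disj_left h1)
  | succ k ihk =>
    intro w hφ hψs
    have hψ0 : Sat w ψ := by
      have := hψs 0 (Nat.zero_le _); rwa [suffix_zero] at this
    have hφ' : Sat (suffix (suffix w 1) k) φ := by rw [susu]; exact hφ
    have hψs' : ∀ j ≤ k, Sat (suffix (suffix w 1) j) ψ := by
      intro j hj
      rw [susu]
      exact hψs (j + 1) (Nat.succ_le_succ hj)
    obtain ⟨m₁, hm₁⟩ := ihk (suffix w 1) hφ' hψs'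
    obtain ⟨iψ, hiψ⟩ := ihψ w hψ0
    have h1 : TTEq (af (LTL.strongRel φ ψ) (prefixWord (suffix w 1) (max m₁ iψ))) :=
      ttEq_mono (le_max_left _ _) hm₁
    have h2 : TTEq (af ψ (prefixWord w (max m₁ iψ + 1))) :=
      ttEq_mono (le_trans (le_max_right _ _) (Nat.le_succ _)) hiψ
    refine ⟨max m₁ iψ + 1, ?_⟩
    rw [prefix_succ] at h2 ⊢
    rw [af_srel_cons]
    exact ttEq_conj h2 (ttEq_disj_right h1)

lemma muMain : ∀ φ : LTL Ap, inMuLTL φ → ∀ w : ℕ → Finset Ap, Sat w φ →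
    ∃ i, TTEq (af φ (prefixWord w i)) := by
  intro φ
  induction φ with
  | tt => exact fun _ w _ => ⟨0, ttEq_tt⟩
  | ff => intro _ w h; simp only [Sat] at h
  | atom a =>
    intro _ w h
    simp only [Sat] at h
    refine ⟨1, ?_⟩
    have : af (LTL.atom a) (prefixWord w 1) = LTL.tt := by
      simp [prefixWord, show List.range 1 = [0] from rfl, af, afLetter, h]
    rw [this]
    exact ttEq_tt
  | natom a =>
    intro _ w h
    simp only [Sat] at h
    refine ⟨1, ?_⟩
    have : af (LTL.natom a) (prefixWord w 1) = LTL.tt := by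
      simp [prefixWord, show List.range 1 = [0] from rfl, af, afLetter, h]
    rw [this]
    exact ttEq_tt
  | conj a b iha ihb =>
    intro hμ w h
    simp only [inMuLTL] at hμ
    simp only [Sat] at h
    obtain ⟨i₁, h₁⟩ := iha hμ.1 w h.1
    obtain ⟨i₂, h₂⟩ := ihb hμ.2 w h.2
    refine ⟨max i₁ i₂, ?_⟩
    rw [af_conj]
    exact ttEq_conj (ttEq_mono (le_max_left _ _) h₁) (ttEq_mono (le_max_right _ _) h₂)
  | disj a b iha ihb =>
    intro hμ w h
    simp only [inMuLTL] at hμ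
    simp only [Sat] at h
    rcases h with h | h
    · obtain ⟨i, hi⟩ := iha hμ.1 w h
      exact ⟨i, by rw [af_disj]; exact ttEq_disj_left hi⟩
    · obtain ⟨i, hi⟩ := ihb hμ.2 w h
      exact ⟨i, by rw [af_disj]; exact ttEq_disj_right hi⟩
  | next a ih =>
    intro hμ w h
    simp only [inMuLTL] at hμ
    simp only [Sat] at h
    obtain ⟨i, hi⟩ := ih hμ (suffix w 1) h
    refine ⟨i + 1, ?_⟩
    rw [prefix_succ]
    exact hi
  | fut a ih =>
    intro hμ w h
    simp only [inMuLTL] at hμ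
    simp only [Sat] at h
    obtain ⟨k, hk⟩ := h
    obtain ⟨i₀, hi₀⟩ := ih hμ (suffix w k) hk
    have hi : TTEq (af a (prefixWord (suffix w k) (i₀ + 1))) :=
      ttEq_mono (Nat.le_succ i₀) hi₀
    refine ⟨k + (i₀ + 1), ?_⟩
    rw [prefix_add]
    have base : TTEq (af (LTL.fut a) (prefixWord (suffix w k) (i₀ + 1))) := by
      rw [prefix_succ] at hi ⊢
      rw [af_fut_cons]
      exact ttEq_disj_left hi
    have prepend : ∀ (u : List (Finset Ap)) (v : List (Finset Ap)),
        TTEq (af (LTL.fut a) v) → TTEq (af (LTL.fut a) (u ++ v)) := by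
      intro u
      induction u with
      | nil => exact fun v hv => hv
      | cons ν u ihu =>
        intro v hv
        rw [List.cons_append, af_fut_cons]
        exact ttEq_disj_right (ihu v hv)
    exact prepend _ _ base
  | glob a ih => intro hμ; simp only [inMuLTL] at hμ
  | untl a b iha ihb =>
    intro hμ w h
    simp only [inMuLTL] at hμ
    simp only [Sat] at h
    obtain ⟨k, hb, ha⟩ := h
    exact untl_aux (iha hμ.1) (ihb hμ.2) k w hb ha
  | wUntl a b iha ihb => intro hμ; simp only [inMuLTL] at hμ
  | strongRel a b iha ihb =>
    intro hμ w h
    simp only [inMuLTL] at hμ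
    simp only [Sat] at h
    obtain ⟨k, ha, hb⟩ := h
    exact srel_aux (iha hμ.1) (ihb hμ.2) k w ha hb
  | rel a b iha ihb => intro hμ; simp only [inMuLTL] at hμ

end AuxLemmas

/-- for `φ ∈ μLTL`, `w ⊨ φ` iff `{i | af(φ, w_{0i}) ≡_P tt}` is infinite. -/
theorem stmt8 {Ap : Type} [DecidableEq Ap] [Fintype Ap]
    (φ : LTL Ap) (hφ : inMuLTL φ) (w : ℕ → Finset Ap) :
    Sat w φ ↔ {i : ℕ | propEquiv (af φ (prefixWord w i)) LTL.tt}.Infinite := by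
  have hset : {i : ℕ | propEquiv (af φ (prefixWord w i)) LTL.tt}
      = {i : ℕ | TTEq (af φ (prefixWord w i))} := by
    ext i; exact propEquiv_tt_iff
  rw [hset]
  constructor
  · intro h
    obtain ⟨i₀, hi⟩ := muMain φ hφ w h
    exact (Set.Ici_infinite i₀).mono fun j hj => ttEq_mono hj hi
  · intro h
    obtain ⟨i, hi⟩ := h.nonempty
    exact (sat_af φ w i).mpr (sat_of_ttEq hi _)
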